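/- arXiv:1509.06425 — 2 statements merged into one kernel-verified Lean document; each statement's English description precedes it below -/
import Mathlib

section
/- Let k be a field, and let I = (t²,t⁵) be the ideal of k[t²,t⁵]. For every m ≥ 2, the ideal I^m of k[t²,t⁵] contains t^{2m} but not t^{2m+1}, while t^{2m+1} ∈ I^m k[t] and t^{2m+1} ∈ k[t²,t⁵]. Consequently the natural map k[t²,t⁵]/I^m → k[t]/I^m k[t] is not injective for m ≥ 2. -/
/-! Every monomial `t^d` occurring in an element of `(t², t⁵)ⁿ` has `d` even with `d ≥ 2n`, or
`d` odd with `d ≥ 2n + 3`, since exponents add up under multiplication. So `t^(2m+1)` is not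
in `I^m`, although it equals `(t²)^m • t` in `I^m k[t]` and lies in `k[t², t⁵]` once `m ≥ 2`. -/

open Polynomial
open scoped Pointwise

namespace Polynomial

variable {R : Type*} [Semiring R] {p q : R[X]} {s t : Set ℕ}

theorem support_X_pow_subset_of_mem {n : ℕ} (hn : n ∈ s) : ↑(X ^ n : R[X]).support ⊆ s := by
  rw [X_pow_eq_monomial]
  exact (Finset.coe_subset.2 (support_monomial_subset n 1)).trans (by simpa using hn)

theorem support_C_subset_of_mem (c : R) (h : 0 ∈ s) : ↑(C c).support ⊆ s :=
  (Finset.coe_subset.2 (support_C_subset c)).trans (by simpa using h)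

theorem support_add_subset_of_subset (hp : ↑p.support ⊆ s) (hq : ↑q.support ⊆ s) :
    ↑(p + q).support ⊆ s := fun _ hd =>
  (Finset.mem_union.1 (support_add hd)).elim (fun h => hp h) (fun h => hq h)

theorem support_mul_subset_add_of_subset (hp : ↑p.support ⊆ s) (hq : ↑q.support ⊆ t) :
    ↑(p * q).support ⊆ s + t := by
  intro d hd
  rw [Finset.mem_coe, mem_support_iff, coeff_mul] at hd
  obtain ⟨⟨i, j⟩, hij, hne⟩ := Finset.exists_ne_zero_of_sum_ne_zero hd
  exact ⟨i, hp (mem_support_iff.2 (left_ne_zero_of_mul hne)),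
    j, hq (mem_support_iff.2 (right_ne_zero_of_mul hne)),
    Finset.HasAntidiagonal.mem_antidiagonal.1 hij⟩

end Polynomial

/-- The exponents of the monomials of `(t², t⁵)ⁿ`: the numerical semigroup
`⟨2, 5⟩ = {0, 2, 4, 5, 6, …}` shifted by `n • {2, 5}`. -/
def twoFiveExponents (n : ℕ) : Set ℕ :=
  {d | d % 2 = 0 ∧ 2 * n ≤ d ∨ d % 2 = 1 ∧ 2 * n + 3 ≤ d ∧ 5 ≤ d}

theorem twoFiveExponents_add_subset (a b : ℕ) :
    twoFiveExponents a + twoFiveExponents b ⊆ twoFiveExponents (a + b) := by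
  rintro _ ⟨i, hi, j, hj, rfl⟩
  simp only [twoFiveExponents, Set.mem_ofPred_eq] at hi hj ⊢
  omega

noncomputable section TwoFive

variable (R : Type*) [CommSemiring R]

abbrev adjoinTwoFive : Subalgebra R R[X] := Algebra.adjoin R {X ^ 2, X ^ 5}

def adjoinTwoFive.X2 : adjoinTwoFive R := ⟨X ^ 2, Algebra.subset_adjoin (Set.mem_insert _ _)⟩

def adjoinTwoFive.X5 : adjoinTwoFive R :=
  ⟨X ^ 5, Algebra.subset_adjoin (Set.mem_insert_of_mem _ rfl)⟩

def idealTwoFive : Ideal (adjoinTwoFive R) := Ideal.span {adjoinTwoFive.X2 R, adjoinTwoFive.X5 R}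

variable {R}

theorem X_pow_mem_adjoinTwoFive {d : ℕ} (hd : d ∈ twoFiveExponents 0) :
    (X ^ d : R[X]) ∈ adjoinTwoFive R := by
  have h2 := (adjoinTwoFive.X2 R).2
  have h5 := (adjoinTwoFive.X5 R).2
  simp only [twoFiveExponents, Set.mem_ofPred_eq] at hd
  rcases hd with ⟨heven, -⟩ | ⟨hodd, -, hd⟩
  · rw [show d = 2 * (d / 2) by omega, pow_mul]
    exact pow_mem h2 _
  · rw [show d = 2 * ((d - 5) / 2) + 5 by omega, pow_add, pow_mul]
    exact mul_mem (pow_mem h2 _) h5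

theorem support_subset_of_mem_adjoinTwoFive {p : R[X]} (hp : p ∈ adjoinTwoFive R) :
    ↑p.support ⊆ twoFiveExponents 0 := by
  induction hp using Algebra.adjoin_induction with
  | mem x hx =>
    rcases hx with rfl | rfl <;> exact support_X_pow_subset_of_mem (by simp [twoFiveExponents])
  | algebraMap c => exact support_C_subset_of_mem c (by simp [twoFiveExponents])
  | add x y _ _ hx hy => exact support_add_subset_of_subset hx hy
  | mul x y _ _ hx hy =>
    exact (support_mul_subset_add_of_subset hx hy).trans (twoFiveExponents_add_subset 0 0)

theorem support_subset_of_mem_idealTwoFive {x : adjoinTwoFive R} (hx : x ∈ idealTwoFive R) :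
    ↑(x : R[X]).support ⊆ twoFiveExponents 1 := by
  obtain ⟨a, b, rfl⟩ := Ideal.mem_span_pair.1 hx
  have hmul {c : adjoinTwoFive R} {e : ℕ} (he : e ∈ twoFiveExponents 1) :
      ↑((c : R[X]) * X ^ e).support ⊆ twoFiveExponents 1 :=
    (support_mul_subset_add_of_subset (support_subset_of_mem_adjoinTwoFive c.2)
      (support_X_pow_subset_of_mem he)).trans (twoFiveExponents_add_subset 0 1)
  exact support_add_subset_of_subset (hmul (by simp [twoFiveExponents]))
    (hmul (by simp [twoFiveExponents]))

theorem support_subset_of_mem_idealTwoFive_pow {n : ℕ} {x : adjoinTwoFive R}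
    (hx : x ∈ idealTwoFive R ^ n) : ↑(x : R[X]).support ⊆ twoFiveExponents n := by
  induction n generalizing x with
  | zero => exact support_subset_of_mem_adjoinTwoFive x.2
  | succ n ih =>
    rw [pow_succ] at hx
    refine Submodule.mul_induction_on hx (fun r hr s hs => ?_)
      (fun _ _ => support_add_subset_of_subset)
    exact (support_mul_subset_add_of_subset (ih hr) (support_subset_of_mem_idealTwoFive hs)).trans
      (twoFiveExponents_add_subset n 1)

theorem coe_ne_X_pow_of_mem_idealTwoFive_pow [Nontrivial R] {n : ℕ} {x : adjoinTwoFive R}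
    (hx : x ∈ idealTwoFive R ^ n) : (x : R[X]) ≠ X ^ (2 * n + 1) := by
  intro hx'
  have := support_subset_of_mem_idealTwoFive_pow hx
  rw [hx', support_X_pow, Finset.coe_singleton, Set.singleton_subset_iff] at this
  simp only [twoFiveExponents, Set.mem_ofPred_eq] at this
  omega

end TwoFive

theorem Submodule.not_injective_mapQ_algebraLinearMap {R A : Type*} [CommRing R] [Ring A]
    [Algebra R A] (J : Ideal R)
    (h : (J : Submodule R R) ≤ (J • (⊤ : Submodule R A)).comap (Algebra.linearMap R A))
    {r : R} (hr : r ∉ J) (hrA : algebraMap R A r ∈ J • (⊤ : Submodule R A)) :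
    ¬ Function.Injective (Submodule.mapQ (J : Submodule R R) _ (Algebra.linearMap R A) h) := by
  intro hinj
  refine hr ((Submodule.Quotient.mk_eq_zero _).1 (hinj ?_))
  rwa [map_zero, Submodule.mapQ_apply, Submodule.Quotient.mk_eq_zero]

theorem stmt4 (k : Type*) [Field k] (m : ℕ) (hm : 2 ≤ m)
    (S : Subalgebra k (Polynomial k)) (hS : S = Algebra.adjoin k {X ^ 2, X ^ 5})
    (I : Ideal S)
    (hI : I = Ideal.span
      {(⟨X ^ 2, by rw [hS]; exact Algebra.subset_adjoin (Set.mem_insert _ _)⟩ : S),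
       (⟨X ^ 5, by rw [hS]; exact Algebra.subset_adjoin (Set.mem_insert_of_mem _ rfl)⟩ : S)}) :
    (∃ x : S, x ∈ I ^ m ∧ (x : Polynomial k) = X ^ (2 * m)) ∧
    (∀ x : S, x ∈ I ^ m → (x : Polynomial k) ≠ X ^ (2 * m + 1)) ∧
    ((X : Polynomial k) ^ (2 * m + 1) ∈ (I ^ m) • (⊤ : Submodule S (Polynomial k))) ∧
    ((X : Polynomial k) ^ (2 * m + 1) ∈ S) ∧
    ¬ Function.Injective
        (Submodule.mapQ ((I ^ m : Ideal S) : Submodule S S)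
          ((I ^ m) • (⊤ : Submodule S (Polynomial k))) (Algebra.linearMap S (Polynomial k))
          (by
            intro a ha
            refine Submodule.mem_comap.mpr ?_
            have : (Algebra.linearMap S (Polynomial k)) a = a • (1 : Polynomial k) := by
              simp [Algebra.linearMap_apply, Algebra.algebraMap_eq_smul_one]
            rw [this]
            exact Submodule.smul_mem_smul ha Submodule.mem_top)) := by
  subst hS hI
  have hpow : adjoinTwoFive.X2 k ^ m ∈ idealTwoFive k ^ m :=
    Ideal.pow_mem_pow (Ideal.subset_span (Set.mem_insert _ _)) m
  have hcoe : ((adjoinTwoFive.X2 k ^ m : adjoinTwoFive k) : k[X]) = X ^ (2 * m) := by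
    rw [SubmonoidClass.coe_pow, adjoinTwoFive.X2, pow_mul]
  have hmem : (X ^ (2 * m + 1) : k[X]) ∈ adjoinTwoFive k :=
    X_pow_mem_adjoinTwoFive (by simp only [twoFiveExponents, Set.mem_ofPred_eq]; omega)
  have hext : (X ^ (2 * m + 1) : k[X]) ∈
      idealTwoFive k ^ m • (⊤ : Submodule (adjoinTwoFive k) k[X]) := by
    have := Submodule.smul_mem_smul hpow (Submodule.mem_top (x := (X : k[X])))
    rwa [Subalgebra.smul_def, hcoe, smul_eq_mul, ← pow_succ] at this
  have hnot (x : adjoinTwoFive k) (hx : x ∈ idealTwoFive k ^ m) : (x : k[X]) ≠ X ^ (2 * m + 1) :=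
    coe_ne_X_pow_of_mem_idealTwoFive_pow hx
  exact ⟨⟨_, hpow, hcoe⟩, hnot, hext, hmem, Submodule.not_injective_mapQ_algebraLinearMap _ _
    (r := ⟨_, hmem⟩) (fun h => hnot _ h rfl) hext⟩
end

section
/- Let (B_j) be an inverse system of modules over a local ring (A, m) with m^{u+1} = 0, and suppose for each j the system of relation modules M_j = {(h₁,…,h_r) ∈ (B_j/mB_j)^r : Σ a_i h_i = 0 in m^u B_j} (for a fixed k-basis a₁,…,a_r of m^u, k = A/m) satisfies the Mittag-Leffler condition with zero transition maps cofinally (for each j there is n > j with M_n → M_j zero). Then the natural map m^u ⊗_k lim← (B_j/mB_j) → lim← (m^u B_j) is an isomorphism. -/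
/-! Since `m^u` is spanned by the `aᵢ`, each `F n` lifts to some `h n ∈ (B n/mB n)^r`, and two
lifts differ by an element of the relation module `M n`. Pushing `h (j + e)` down to level `j`
gives a value independent of `e` as soon as `M (j + e) → M j` vanishes; these stable values form
the required thread, and the same vanishing forces any other thread lifting `F` to agree with it. -/

open IsLocalRing

/-- Multiplication by `a ∈ m^u` descends to `N/mN → N` when `m^{u+1} = 0`. -/
noncomputable def powSmulLift (A : Type u) [CommRing A] [IsLocalRing A] (u' : ℕ)
    (hm : (maximalIdeal A) ^ (u' + 1) = ⊥) (a : A) (ha : a ∈ (maximalIdeal A) ^ u')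
    (N : Type v) [AddCommGroup N] [Module A N] :
    (N ⧸ ((maximalIdeal A) • (⊤ : Submodule A N))) →ₗ[A] N :=
  Submodule.liftQ _ (LinearMap.lsmul A N a) (by
    intro x hx
    simp only [LinearMap.mem_ker, LinearMap.lsmul_apply]
    refine Submodule.smul_induction_on hx (fun c hc n _ => ?_) (fun y z hy hz => ?_)
    · rw [smul_comm, ← smul_assoc]
      have h1 : c • a ∈ (maximalIdeal A) • ((maximalIdeal A) ^ u') :=
        Submodule.smul_mem_smul hc ha
      have h2 : (maximalIdeal A) • ((maximalIdeal A) ^ u') = (maximalIdeal A) ^ (u' + 1) := by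
        rw [smul_eq_mul, pow_succ']
      rw [h2, hm] at h1
      rw [Ideal.mem_bot.mp h1, zero_smul]
    · rw [smul_add, hy, hz, add_zero])

/-- An `A`-algebra map descends to the quotients by `m·(-)`. -/
noncomputable def quotStep {A : Type u} [CommRing A] [IsLocalRing A]
    {N₁ : Type v} {N₂ : Type w} [CommRing N₁] [CommRing N₂] [Algebra A N₁] [Algebra A N₂]
    (φ : N₁ →ₐ[A] N₂) :
    (N₁ ⧸ ((maximalIdeal A) • (⊤ : Submodule A N₁))) →ₗ[A]
      (N₂ ⧸ ((maximalIdeal A) • (⊤ : Submodule A N₂))) :=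
  Submodule.mapQ _ _ φ.toLinearMap (by
    rw [← Submodule.map_le_iff_le_comap, Submodule.map_smul'']
    exact Submodule.smul_mono le_rfl le_top)

/-- Composite of the transition maps of the inverse system. -/
noncomputable def chainComp {A : Type u} [CommRing A] (B : ℕ → Type v)
    [∀ j, CommRing (B j)] [∀ j, Algebra A (B j)]
    (f : ∀ j, B (j + 1) →ₐ[A] B j) (j : ℕ) : (d : ℕ) → (B (j + d) →ₐ[A] B j)
  | 0 => AlgHom.id A (B j)
  | (d + 1) => (chainComp B f j d).comp (f (j + d))

theorem chainComp_apply_of_compat {A : Type*} [CommRing A] {B : ℕ → Type*}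
    [∀ j, CommRing (B j)] [∀ j, Algebra A (B j)] (f : ∀ j, B (j + 1) →ₐ[A] B j)
    {F : ∀ j, B j} (hF : ∀ j, f j (F (j + 1)) = F j) (j : ℕ) :
    ∀ e, chainComp B f j e (F (j + e)) = F j
  | 0 => rfl
  | e + 1 => by
    change chainComp B f j e (f (j + e) (F (j + e + 1))) = F j
    rw [hF, chainComp_apply_of_compat f hF j e]

section

variable {A : Type*} [CommRing A] [IsLocalRing A]

local notation:35 N:36 " ⧸𝔪" => N ⧸ ((maximalIdeal A) • (⊤ : Submodule A N))

variable {N₁ N₂ N₃ : Type*} [CommRing N₁] [CommRing N₂] [CommRing N₃]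
  [Algebra A N₁] [Algebra A N₂] [Algebra A N₃]

theorem quotStep_mk (φ : N₁ →ₐ[A] N₂) (x : N₁) :
    quotStep φ (Submodule.Quotient.mk x) = Submodule.Quotient.mk (φ x) :=
  rfl

theorem quotStep_id : quotStep (AlgHom.id A N₁) = LinearMap.id := by
  ext; rfl

theorem quotStep_comp (φ : N₂ →ₐ[A] N₃) (ψ : N₁ →ₐ[A] N₂) :
    quotStep (φ.comp ψ) = (quotStep φ).comp (quotStep ψ) := by
  ext; rfl

variable {u r : ℕ} (hm : maximalIdeal A ^ (u + 1) = ⊥) {a : Fin r → A}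
  (ha : ∀ i, a i ∈ maximalIdeal A ^ u)

/-- The map `(N/mN)^r → N`, `h ↦ ∑ aᵢ hᵢ`, whose kernel is the relation module. -/
noncomputable def sumPowSmulLift (N : Type*) [AddCommGroup N] [Module A N] :
    (Fin r → N ⧸𝔪) →ₗ[A] N where
  toFun h := ∑ i, powSmulLift A u hm (a i) (ha i) N (h i)
  map_add' _ _ := by simp only [Pi.add_apply, map_add, Finset.sum_add_distrib]
  map_smul' _ _ := by simp only [Pi.smul_apply, map_smul, Finset.smul_sum, RingHom.id_apply]

theorem sumPowSmulLift_mk {N : Type*} [AddCommGroup N] [Module A N] (x : Fin r → N) :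
    sumPowSmulLift hm ha N (fun i => Submodule.Quotient.mk (x i)) = ∑ i, a i • x i :=
  rfl

theorem sumPowSmulLift_quotStep (φ : N₁ →ₐ[A] N₂) (h : Fin r → N₁ ⧸𝔪) :
    sumPowSmulLift hm ha N₂ (fun i => quotStep φ (h i)) = φ (sumPowSmulLift hm ha N₁ h) := by
  obtain ⟨x, rfl⟩ : ∃ x : Fin r → N₁, (fun i => Submodule.Quotient.mk (x i)) = h :=
    (Submodule.Quotient.mk_surjective _).comp_left h
  simp only [quotStep_mk, sumPowSmulLift_mk, map_sum, map_smul]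

theorem exists_sumPowSmulLift_eq (hspan : maximalIdeal A ^ u ≤ Ideal.span (Set.range a))
    {N : Type*} [AddCommGroup N] [Module A N] {x : N}
    (hx : x ∈ (maximalIdeal A ^ u) • (⊤ : Submodule A N)) :
    ∃ h, sumPowSmulLift hm ha N h = x := by
  suffices ∃ y : Fin r → N, ∑ i, a i • y i = x by
    obtain ⟨y, rfl⟩ := this
    exact ⟨_, sumPowSmulLift_mk hm ha y⟩
  refine Submodule.smul_induction_on hx (fun c hc n _ => ?_) ?_
  · obtain ⟨γ, rfl⟩ := Ideal.mem_span_range_iff_exists_fun.1 (hspan hc)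
    exact ⟨fun i => γ i • n, by simp only [Finset.sum_smul, smul_smul, mul_comm]⟩
  · rintro _ _ ⟨y, rfl⟩ ⟨y', rfl⟩
    exact ⟨y + y', by simp only [Pi.add_apply, smul_add, Finset.sum_add_distrib]⟩

variable {B : ℕ → Type*} [∀ j, CommRing (B j)] [∀ j, Algebra A (B j)]
  (f : ∀ j, B (j + 1) →ₐ[A] B j)

theorem quotStep_chainComp_succ_apply (j e : ℕ) (x : B (j + (e + 1)) ⧸𝔪) :
    quotStep (chainComp B f j (e + 1)) x =
      quotStep (chainComp B f j e) (quotStep (f (j + e)) x) := by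
  rw [chainComp, quotStep_comp, LinearMap.comp_apply]

theorem quotStep_chainComp_zero_apply (j : ℕ) (x : B (j + 0) ⧸𝔪) :
    quotStep (chainComp B f j 0) x = x :=
  LinearMap.congr_fun quotStep_id x

theorem quotStep_chainComp_apply_of_compat {y : ∀ j, B j ⧸𝔪}
    (hy : ∀ j, quotStep (f j) (y (j + 1)) = y j) (j : ℕ) :
    ∀ e, quotStep (chainComp B f j e) (y (j + e)) = y j
  | 0 => quotStep_chainComp_zero_apply f j (y j)
  | e + 1 => (quotStep_chainComp_succ_apply f j e _).trans <|
    (congrArg (quotStep (chainComp B f j e)) (hy (j + e))).trans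
      (quotStep_chainComp_apply_of_compat hy j e)

/-- Stated for a family `y` so that no cast between `B (j + 1 + e)` and `B (j + (e + 1))` is
needed. -/
theorem quotStep_comp_quotStep_chainComp (j : ℕ) :
    ∀ (e : ℕ) (y : ∀ n, B n ⧸𝔪),
      quotStep (f j) (quotStep (chainComp B f (j + 1) e) (y (j + 1 + e))) =
        quotStep (chainComp B f j (e + 1)) (y (j + (e + 1)))
  | 0, y => by
    rw [quotStep_chainComp_succ_apply, quotStep_chainComp_zero_apply,
      quotStep_chainComp_zero_apply]
    rfl
  | e + 1, y => by
    rw [quotStep_chainComp_succ_apply, quotStep_chainComp_succ_apply f j (e + 1)]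
    exact quotStep_comp_quotStep_chainComp j e (fun n => quotStep (f n) (y (n + 1)))

/-- The transition map `M (j + d) → M j` of relation modules vanishes. -/
def TransitionKillsRelations (j d : ℕ) : Prop :=
  ∀ h : Fin r → B (j + d) ⧸𝔪, sumPowSmulLift hm ha (B (j + d)) h = 0 →
    ∀ i, quotStep (chainComp B f j d) (h i) = 0

namespace TransitionKillsRelations

variable {hm ha f}

theorem mono {j d e : ℕ} (hd : TransitionKillsRelations hm ha f j d) (hde : d ≤ e) :
    TransitionKillsRelations hm ha f j e := by
  induction e, hde using Nat.le_induction with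
  | base => exact hd
  | succ e _ ih =>
    intro h hh i
    rw [quotStep_chainComp_succ_apply]
    refine ih (fun i => quotStep (f (j + e)) (h i)) ?_ i
    rw [sumPowSmulLift_quotStep]
    exact (congrArg (f (j + e)) hh).trans (map_zero _)

theorem quotStep_eq {j d : ℕ} (hd : TransitionKillsRelations hm ha f j d)
    {x x' : Fin r → B (j + d) ⧸𝔪}
    (hxx' : sumPowSmulLift hm ha (B (j + d)) x = sumPowSmulLift hm ha (B (j + d)) x')
    (i : Fin r) :
    quotStep (chainComp B f j d) (x i) = quotStep (chainComp B f j d) (x' i) := by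
  rw [← sub_eq_zero, ← map_sub]
  exact hd (x - x') (by rw [map_sub, hxx', sub_self]) i

end TransitionKillsRelations

theorem exists_compat_sumPowSmulLift_eq (hML : ∀ j, ∃ d, TransitionKillsRelations hm ha f j d)
    {F : ∀ j, B j} (hF : ∀ j, ∃ h, sumPowSmulLift hm ha (B j) h = F j)
    (hFcompat : ∀ j, f j (F (j + 1)) = F j) :
    ∃ g : Fin r → ∀ j, B j ⧸𝔪, (∀ i j, quotStep (f j) (g i (j + 1)) = g i j) ∧
      ∀ j, F j = sumPowSmulLift hm ha (B j) (fun i => g i j) := by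
  choose h hh using hF
  choose d hd using hML
  have stable : ∀ j e, d j ≤ e → ∀ i, quotStep (chainComp B f j e) (h (j + e) i) =
      quotStep (chainComp B f j (d j)) (h (j + d j) i) := by
    intro j e hde
    induction e, hde using Nat.le_induction with
    | base => exact fun i => rfl
    | succ e hde ih =>
      intro i
      rw [quotStep_chainComp_succ_apply, ← ih i]
      refine ((hd j).mono hde).quotStep_eq
        (x := fun i => quotStep (f (j + e)) (h (j + (e + 1)) i)) (x' := h (j + e)) ?_ i
      rw [sumPowSmulLift_quotStep, hh]
      exact (congrArg (f (j + e)) (hh _)).trans (hFcompat (j + e))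
  refine ⟨fun i j => quotStep (chainComp B f j (d j)) (h (j + d j) i),
    fun i j => ?_, fun j => ?_⟩
  · calc quotStep (f j) (quotStep (chainComp B f (j + 1) (d (j + 1))) (h (j + 1 + d (j + 1)) i))
        = quotStep (f j) (quotStep (chainComp B f (j + 1) (d (j + 1) + d j))
            (h (j + 1 + (d (j + 1) + d j)) i)) := by
          rw [stable (j + 1) _ (Nat.le_add_right _ _)]
      _ = quotStep (chainComp B f j (d (j + 1) + d j + 1)) (h (j + (d (j + 1) + d j + 1)) i) :=
          quotStep_comp_quotStep_chainComp f j _ (fun n => h n i)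
      _ = quotStep (chainComp B f j (d j)) (h (j + d j) i) := stable j _ (by omega) i
  · rw [sumPowSmulLift_quotStep, hh, chainComp_apply_of_compat f hFcompat]

theorem compat_eq_of_sumPowSmulLift_eq (hML : ∀ j, ∃ d, TransitionKillsRelations hm ha f j d)
    {y y' : Fin r → ∀ j, B j ⧸𝔪} (hy : ∀ i j, quotStep (f j) (y i (j + 1)) = y i j)
    (hy' : ∀ i j, quotStep (f j) (y' i (j + 1)) = y' i j)
    (hyy' : ∀ j, sumPowSmulLift hm ha (B j) (fun i => y i j) =
      sumPowSmulLift hm ha (B j) (fun i => y' i j)) :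
    y = y' := by
  funext i j
  obtain ⟨d, hd⟩ := hML j
  rw [← quotStep_chainComp_apply_of_compat f (hy i) j d,
    ← quotStep_chainComp_apply_of_compat f (hy' i) j d]
  exact hd.quotStep_eq (hyy' (j + d)) i

end

theorem stmt18_general (k : Type) [Field k] (A : Type) [CommRing A] [Algebra k A] [IsLocalRing A]
    (u r : ℕ) (hm : (maximalIdeal A) ^ (u + 1) = ⊥)
    -- a₁, …, a_r is a k-basis of m^u :
    (a : Fin r → A) (ha : ∀ i, a i ∈ (maximalIdeal A) ^ u)
    (hspan : ∀ x ∈ (maximalIdeal A) ^ u, ∃ c : Fin r → k, x = ∑ i, c i • a i)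
    -- the inverse system (B_j) :
    (B : ℕ → Type) [∀ j, CommRing (B j)] [∀ j, Algebra A (B j)]
    (f : ∀ j, B (j + 1) →ₐ[A] B j)
    -- Mittag-Leffler: for each j some M_{j+d} → M_j is zero :
    (hML : ∀ j : ℕ, ∃ d : ℕ, 0 < d ∧
      ∀ h : Fin r → (B (j + d) ⧸ ((maximalIdeal A) • (⊤ : Submodule A (B (j + d))))),
        (∑ i, powSmulLift A u hm (a i) (ha i) (B (j + d)) (h i)) = 0 →
        ∀ i, quotStep (chainComp B f j d) (h i) = 0)
    -- an element F of lim← (m^u B_j) :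
    (F : ∀ j, B j)
    (hFmem : ∀ j, F j ∈ ((maximalIdeal A) ^ u • (⊤ : Submodule A (B j))))
    (hFcompat : ∀ j, f j (F (j + 1)) = F j) :
    -- F = Σ aᵢ gᵢ for a unique g ∈ (lim← B_j/mB_j)^r :
    ∃! g : Fin r → (∀ j, B j ⧸ ((maximalIdeal A) • (⊤ : Submodule A (B j)))),
      (∀ i j, quotStep (f j) (g i (j + 1)) = g i j) ∧
      (∀ j, F j = ∑ i, powSmulLift A u hm (a i) (ha i) (B j) (g i j)) := by
  have hspan' : maximalIdeal A ^ u ≤ Ideal.span (Set.range a) := fun x hx => by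
    obtain ⟨c, rfl⟩ := hspan x hx
    exact Ideal.mem_span_range_iff_exists_fun.2
      ⟨fun i => algebraMap k A (c i), by simp only [Algebra.smul_def]⟩
  have hML' : ∀ j, ∃ d, TransitionKillsRelations hm ha f j d :=
    fun j => (hML j).imp fun _ hd => hd.2
  obtain ⟨g, hg, hgF⟩ := exists_compat_sumPowSmulLift_eq hm ha f hML'
    (fun j => exists_sumPowSmulLift_eq hm ha hspan' (hFmem j)) hFcompat
  exact ⟨g, ⟨hg, hgF⟩, fun y ⟨hy, hyF⟩ =>
    compat_eq_of_sumPowSmulLift_eq hm ha f hML' hy hg fun j => (hyF j).symm.trans (hgF j)⟩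

theorem stmt18 (k : Type) [Field k] (A : Type) [CommRing A] [Algebra k A] [IsLocalRing A]
    -- A has residue field k :
    (hres : ∀ x : A, ∃ c : k, x - algebraMap k A c ∈ maximalIdeal A)
    (u r : ℕ) (hm : (maximalIdeal A) ^ (u + 1) = ⊥)
    -- a₁, …, a_r is a k-basis of m^u :
    (a : Fin r → A) (ha : ∀ i, a i ∈ (maximalIdeal A) ^ u)
    (hspan : ∀ x ∈ (maximalIdeal A) ^ u, ∃ c : Fin r → k, x = ∑ i, c i • a i)
    (hindep : ∀ c : Fin r → k, ∑ i, c i • a i = 0 → c = 0)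
    -- the inverse system (B_j) :
    (B : ℕ → Type) [∀ j, CommRing (B j)] [∀ j, Algebra A (B j)]
    (f : ∀ j, B (j + 1) →ₐ[A] B j)
    -- Mittag-Leffler: for each j some M_{j+d} → M_j is zero :
    (hML : ∀ j : ℕ, ∃ d : ℕ, 0 < d ∧
      ∀ h : Fin r → (B (j + d) ⧸ ((maximalIdeal A) • (⊤ : Submodule A (B (j + d))))),
        (∑ i, powSmulLift A u hm (a i) (ha i) (B (j + d)) (h i)) = 0 →
        ∀ i, quotStep (chainComp B f j d) (h i) = 0)
    -- an element F of lim← (m^u B_j) :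
    (F : ∀ j, B j)
    (hFmem : ∀ j, F j ∈ ((maximalIdeal A) ^ u • (⊤ : Submodule A (B j))))
    (hFcompat : ∀ j, f j (F (j + 1)) = F j) :
    -- F = Σ aᵢ gᵢ for a unique g ∈ (lim← B_j/mB_j)^r :
    ∃! g : Fin r → (∀ j, B j ⧸ ((maximalIdeal A) • (⊤ : Submodule A (B j)))),
      (∀ i j, quotStep (f j) (g i (j + 1)) = g i j) ∧
      (∀ j, F j = ∑ i, powSmulLift A u hm (a i) (ha i) (B j) (g i j)) :=
  stmt18_general k A u r hm a ha hspan B f hML F hFmem hFcompat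
end
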